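/- Fix b = −3/16 (so γ = 1 + (16/3)b = 0), let ω > 0 and −2√ω < c < 0. Then the momentum of the soliton satisfies P(φ_{ω,c}) = −((2ω + c²)/(3c))·M(φ_{ω,c}), where M(φ_{ω,c}) = ∫_ℝ Φ_{ω,c}² and P(φ_{ω,c}) = Re ∫_ℝ i φ_{ω,c}'(x)·conj(φ_{ω,c}(x)) dx. -/

import Mathlib

open MeasureTheory Real Set

/-- The soliton profile of the derivative NLS after gauge transformation:
the algebraic profile when `c = 2√ω`, the bright profile when `-2√ω < c < 2√ω`. -/
noncomputable def Phi (γ ω c x : ℝ) : ℝ :=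
  if c = 2 * Real.sqrt ω then
    Real.sqrt (4 * c / ((c * x) ^ 2 + γ))
  else
    Real.sqrt (2 * (4 * ω - c ^ 2) /
      (Real.sqrt (c ^ 2 + γ * (4 * ω - c ^ 2)) * Real.cosh (Real.sqrt (4 * ω - c ^ 2) * x) - c))

/-- The complex soliton profile
`φ_{ω,c}(x) = exp(i((c/2)x - (1/4)∫_{-∞}^x Φ²)) Φ(x)`. -/
noncomputable def solp (γ ω c x : ℝ) : ℂ :=
  Complex.exp (Complex.I *
      Complex.ofReal (c / 2 * x - 1 / 4 * ∫ y in Iic x, (Phi γ ω c y) ^ 2)) *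
    Complex.ofReal (Phi γ ω c x)

/-- The mass `M(φ_{ω,c}) = ∫_ℝ Φ_{ω,c}²`. -/
noncomputable def solMass (γ ω c : ℝ) : ℝ := ∫ x : ℝ, (Phi γ ω c x) ^ 2

/-- The momentum `P(φ_{ω,c}) = Re ∫_ℝ i φ' conj(φ)`. -/
noncomputable def solMom (γ ω c : ℝ) : ℝ :=
  (∫ x : ℝ, Complex.I * deriv (fun y => solp γ ω c y) x *
    (starRingEnd ℂ) (solp γ ω c x)).re

/-!
For `γ = 0` and `c < 0` the profile is a pure sech, `Φ = B sech (a x)` with `a = √(4ω - c²) / 2`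
and `B² = (4ω - c²) / (-c)`. For `φ = e^{iθ} Φ` with `Φ` real, `Re (i φ' φ̄) = -θ' Φ²`, and the
phase of the soliton has `θ' = c/2 - Φ²/4`; hence `P = -(c/2) M + (1/4) ∫ Φ⁴`. The antiderivatives
`tanh` and `tanh - tanh³/3` of `sech²` and `sech⁴` give `∫ sech² = 2` and `∫ sech⁴ = 4/3`, so
`∫ Φ⁴ = (2B²/3) M` and `P = (-c/2 + B²/6) M = -((2ω + c²)/(3c)) M`.
-/

open Filter Topology

theorem integrable_deriv_of_nonneg {g g' : ℝ → ℝ} {m n : ℝ}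
    (hderiv : ∀ x, HasDerivAt g (g' x) x) (hg' : ∀ x, 0 ≤ g' x)
    (hbot : Tendsto g atBot (𝓝 m)) (htop : Tendsto g atTop (𝓝 n)) : Integrable g' := by
  have hmono : Monotone g := monotone_of_deriv_nonneg (fun x => (hderiv x).differentiableAt)
    fun x => (hderiv x).deriv ▸ hg' x
  have hcont : Continuous g := continuous_iff_continuousAt.2 fun x => (hderiv x).continuousAt
  have hint : ∀ a b, IntegrableOn g' (Ioc a b) := fun a b =>
    intervalIntegral.integrableOn_deriv_of_nonneg hcont.continuousOn
      (fun x _ => hderiv x) fun x _ => hg' x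
  refine integrable_of_intervalIntegral_norm_bounded (n - m) (fun i => hint (-i) i)
    tendsto_neg_atTop_atBot tendsto_id (.of_forall fun i => ?_)
  calc ∫ x in -i..i, ‖g' x‖ = ∫ x in -i..i, g' x := by
        simp only [Real.norm_of_nonneg (hg' _)]
    _ = g i - g (-i) := intervalIntegral.integral_eq_sub_of_hasDerivAt (fun x _ => hderiv x)
        (intervalIntegrable_iff.2 (hint _ _))
    _ ≤ n - m := sub_le_sub (hmono.ge_of_tendsto htop i) (hmono.le_of_tendsto hbot (-i))

theorem hasDerivAt_integral_Iic {f : ℝ → ℝ} (hf : Integrable f) (hfc : Continuous f) (x : ℝ) :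
    HasDerivAt (fun t => ∫ y in Iic t, f y) (f x) x := by
  have hsplit :
      (fun t => ∫ y in Iic t, f y) = fun t => (∫ y in Iic 0, f y) + ∫ y in 0..t, f y := by
    funext t
    rw [← intervalIntegral.integral_Iic_sub_Iic hf.integrableOn hf.integrableOn]
    ring
  rw [hsplit]
  exact (intervalIntegral.integral_hasDerivAt_right hf.intervalIntegrable
    hfc.stronglyMeasurable.stronglyMeasurableAtFilter hfc.continuousAt).const_add _

namespace Real

theorem hasDerivAt_tanh (x : ℝ) : HasDerivAt tanh ((cosh x)⁻¹ ^ 2) x := by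
  have h := (hasDerivAt_sinh x).div (hasDerivAt_cosh x) (cosh_pos x).ne'
  rw [show sinh / cosh = tanh from funext fun y => (tanh_eq_sinh_div_cosh y).symm] at h
  refine h.congr_deriv ?_
  rw [← sq, ← sq, cosh_sq_sub_sinh_sq, inv_pow, one_div]

theorem continuous_tanh : Continuous tanh :=
  continuous_iff_continuousAt.2 fun x => (hasDerivAt_tanh x).continuousAt

theorem tendsto_tanh_atTop : Tendsto tanh atTop (𝓝 1) := by
  have hexp : Tendsto (fun x => exp (2 * x) + 1) atTop atTop :=
    tendsto_atTop_add_const_right _ _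
      (tendsto_exp_atTop.comp (tendsto_id.const_mul_atTop two_pos))
  have h := (tendsto_const_nhds (x := (1 : ℝ))).sub
    ((tendsto_const_nhds (x := (2 : ℝ))).div_atTop hexp)
  rw [sub_zero] at h
  refine h.congr fun x => ?_
  have : exp (2 * x) = exp x ^ 2 := by rw [← exp_nat_mul]; norm_num
  rw [tanh_eq_sinh_div_cosh, sinh_eq, cosh_eq, exp_neg, this]
  field_simp
  ring

theorem tendsto_tanh_atBot : Tendsto tanh atBot (𝓝 (-1)) := by
  simpa [Function.comp_def] using (tendsto_tanh_atTop.comp tendsto_neg_atBot_atTop).neg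


theorem one_sub_tanh_sq (x : ℝ) : 1 - tanh x ^ 2 = (cosh x)⁻¹ ^ 2 := by
  have hc := (cosh_pos x).ne'
  rw [tanh_eq_sinh_div_cosh]
  field_simp
  linear_combination cosh_sq_sub_sinh_sq x

theorem integrable_inv_cosh_sq : Integrable fun x => (cosh x)⁻¹ ^ 2 :=
  integrable_deriv_of_nonneg hasDerivAt_tanh (fun _ => by positivity)
    tendsto_tanh_atBot tendsto_tanh_atTop

theorem integral_inv_cosh_sq : ∫ x, (cosh x)⁻¹ ^ 2 = 2 := by
  rw [integral_of_hasDerivAt_of_tendsto hasDerivAt_tanh integrable_inv_cosh_sq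
    tendsto_tanh_atBot tendsto_tanh_atTop]
  norm_num

theorem hasDerivAt_tanh_sub_tanh_pow_three_div_three (x : ℝ) :
    HasDerivAt (fun y => tanh y - tanh y ^ 3 / 3) ((cosh x)⁻¹ ^ 4) x := by
  refine ((hasDerivAt_tanh x).sub (((hasDerivAt_tanh x).pow 3).div_const 3)).congr_deriv ?_
  rw [show (cosh x)⁻¹ ^ 4 = (cosh x)⁻¹ ^ 2 * (1 - tanh x ^ 2) by rw [one_sub_tanh_sq]; ring]
  push_cast
  ring

theorem integrable_inv_cosh_pow {n : ℕ} (hn : 2 ≤ n) : Integrable fun x => (cosh x)⁻¹ ^ n := by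
  refine integrable_inv_cosh_sq.mono' (by fun_prop) (ae_of_all _ fun x => ?_)
  have hsech : (cosh x)⁻¹ ≤ 1 := inv_le_one_of_one_le₀ (one_le_cosh x)
  rw [norm_of_nonneg (by positivity)]
  exact pow_le_pow_of_le_one (by positivity) hsech hn

theorem integral_inv_cosh_pow_four : ∫ x, (cosh x)⁻¹ ^ 4 = 4 / 3 := by
  rw [integral_of_hasDerivAt_of_tendsto hasDerivAt_tanh_sub_tanh_pow_three_div_three
    (integrable_inv_cosh_pow (by norm_num))
    (tendsto_tanh_atBot.sub ((tendsto_tanh_atBot.pow 3).div_const 3))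
    (tendsto_tanh_atTop.sub ((tendsto_tanh_atTop.pow 3).div_const 3))]
  norm_num

end Real

section SechProfile

noncomputable def sechProfile (B a x : ℝ) : ℝ := B * (cosh (a * x))⁻¹

variable (B a : ℝ)

theorem hasDerivAt_sechProfile (x : ℝ) :
    HasDerivAt (sechProfile B a) (-a * tanh (a * x) * sechProfile B a x) x := by
  have hax : HasDerivAt (fun y => a * y) a x := by simpa using (hasDerivAt_id x).const_mul a
  refine ((((hasDerivAt_cosh (a * x)).comp x hax).inv (cosh_pos _).ne').const_mul B).congr_deriv
    ?_
  rw [sechProfile, tanh_eq_sinh_div_cosh, Function.comp_apply]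
  field_simp

theorem integral_sechProfile_sq : ∫ x, sechProfile B a x ^ 2 = 2 * B ^ 2 / |a| := by
  simp_rw [sechProfile, mul_pow]
  rw [integral_const_mul, Measure.integral_comp_mul_left (fun x => (cosh x)⁻¹ ^ 2),
    Real.integral_inv_cosh_sq, smul_eq_mul, abs_inv]
  ring

theorem integral_sechProfile_pow_four :
    ∫ x, sechProfile B a x ^ 4 = 2 * B ^ 2 / 3 * ∫ x, sechProfile B a x ^ 2 := by
  rw [integral_sechProfile_sq]
  simp_rw [sechProfile, mul_pow]
  rw [integral_const_mul, Measure.integral_comp_mul_left (fun x => (cosh x)⁻¹ ^ 4),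
    Real.integral_inv_cosh_pow_four, smul_eq_mul, abs_inv]
  ring

variable {a}

theorem integrable_sechProfile_pow {n : ℕ} (hn : 2 ≤ n) (ha : a ≠ 0) :
    Integrable fun x => sechProfile B a x ^ n := by
  simp_rw [sechProfile, mul_pow]
  exact ((Real.integrable_inv_cosh_pow hn).comp_mul_left' ha).const_mul _

theorem integrable_tanh_mul_sechProfile_sq (ha : a ≠ 0) :
    Integrable fun x => tanh (a * x) * sechProfile B a x ^ 2 := by
  refine (integrable_sechProfile_pow B le_rfl ha).bdd_mul (c := 1)
    (Real.continuous_tanh.comp (continuous_const_mul a)).aestronglyMeasurable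
    (ae_of_all _ fun x => ?_)
  rw [norm_eq_abs]
  exact (abs_tanh_lt_one _).le

end SechProfile

open Complex in
theorem I_mul_deriv_modulated_mul_conj {θ Φ : ℝ → ℝ} {θ' Φ' x : ℝ}
    (hθ : HasDerivAt θ θ' x) (hΦ : HasDerivAt Φ Φ' x) :
    I * deriv (fun y => exp (I * θ y) * Φ y) x * (starRingEnd ℂ) (exp (I * θ x) * Φ x)
      = ((-(θ' * Φ x ^ 2) : ℝ) : ℂ) + ((Φ' * Φ x : ℝ) : ℂ) * I := by
  have hderiv := ((hθ.ofReal_comp.const_mul I).cexp).mul hΦ.ofReal_comp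
  have hunit : exp (I * θ x) * (starRingEnd ℂ) (exp (I * θ x)) = 1 := by
    rw [← exp_conj, map_mul, conj_I, conj_ofReal, ← Complex.exp_add, neg_mul, add_neg_cancel,
      Complex.exp_zero]
  rw [show deriv (fun y => exp (I * θ y) * Φ y) x = _ from hderiv.deriv, map_mul, conj_ofReal]
  push_cast
  linear_combination (I * (I * θ' * Φ x + Φ') * Φ x) * hunit + θ' * Φ x ^ 2 * I_sq

theorem re_integral_I_mul_deriv_modulated_mul_conj {θ Φ θ' Φ' : ℝ → ℝ}
    (hθ : ∀ x, HasDerivAt θ (θ' x) x) (hΦ : ∀ x, HasDerivAt Φ (Φ' x) x)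
    (hre : Integrable fun x => θ' x * Φ x ^ 2) (him : Integrable fun x => Φ' x * Φ x) :
    (∫ x, Complex.I * deriv (fun y => Complex.exp (Complex.I * θ y) * Φ y) x *
        (starRingEnd ℂ) (Complex.exp (Complex.I * θ x) * Φ x)).re
      = -∫ x, θ' x * Φ x ^ 2 := by
  simp_rw [I_mul_deriv_modulated_mul_conj (hθ _) (hΦ _)]
  rw [integral_add hre.neg.ofReal (him.ofReal.mul_const _), integral_mul_const,
    integral_complex_ofReal, integral_complex_ofReal, integral_neg]
  simp

theorem solMom_eq_of_hasDerivAt {γ ω c : ℝ} {Φ' : ℝ → ℝ}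
    (hΦ : ∀ x, HasDerivAt (Phi γ ω c) (Φ' x) x)
    (h2 : Integrable fun x => Phi γ ω c x ^ 2) (h4 : Integrable fun x => Phi γ ω c x ^ 4)
    (him : Integrable fun x => Φ' x * Phi γ ω c x) :
    solMom γ ω c = -(c / 2) * solMass γ ω c + 1 / 4 * ∫ x, Phi γ ω c x ^ 4 := by
  have hcont : Continuous fun x => Phi γ ω c x ^ 2 :=
    (continuous_iff_continuousAt.2 fun x => (hΦ x).continuousAt).pow 2
  have hθ (x : ℝ) : HasDerivAt (fun t => c / 2 * t - 1 / 4 * ∫ y in Iic t, Phi γ ω c y ^ 2)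
      (c / 2 - 1 / 4 * Phi γ ω c x ^ 2) x := by
    have h := ((hasDerivAt_id x).const_mul (c / 2)).sub
      ((hasDerivAt_integral_Iic h2 hcont x).const_mul (1 / 4))
    rwa [mul_one] at h
  have hdensity : (fun x => (c / 2 - 1 / 4 * Phi γ ω c x ^ 2) * Phi γ ω c x ^ 2)
      = fun x => c / 2 * Phi γ ω c x ^ 2 - 1 / 4 * Phi γ ω c x ^ 4 := by
    funext x; ring
  have hre : Integrable fun x => c / 2 * Phi γ ω c x ^ 2 - 1 / 4 * Phi γ ω c x ^ 4 :=
    (h2.const_mul _).sub (h4.const_mul _)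
  have hmom : solMom γ ω c = -∫ x, (c / 2 - 1 / 4 * Phi γ ω c x ^ 2) * Phi γ ω c x ^ 2 :=
    re_integral_I_mul_deriv_modulated_mul_conj hθ hΦ (hdensity ▸ hre) him
  rw [hmom, solMass, hdensity,
    integral_sub (h2.const_mul _) (h4.const_mul _), integral_const_mul, integral_const_mul]
  ring

theorem Phi_zero_eq_sechProfile {ω c : ℝ} (hc : c < 0) :
    Phi 0 ω c = sechProfile √((4 * ω - c ^ 2) / -c) (√(4 * ω - c ^ 2) / 2) := by
  funext x
  have hne : c ≠ 2 * √ω := (hc.trans_le (by positivity)).ne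
  have hcosh (y : ℝ) : cosh (2 * y) + 1 = 2 * cosh y ^ 2 := by
    rw [cosh_two_mul, sinh_sq]; ring
  rw [Phi, if_neg hne, zero_mul, add_zero, sqrt_sq_eq_abs, abs_of_neg hc, sechProfile,
    ← sqrt_sq (inv_nonneg.2 (cosh_pos _).le), ← sqrt_mul' _ (sq_nonneg _),
    show √(4 * ω - c ^ 2) * x = 2 * (√(4 * ω - c ^ 2) / 2 * x) by ring,
    show ∀ y, -c * y - c = -c * (y + 1) by intro y; ring, hcosh]
  congr 1
  have := cosh_pos (√(4 * ω - c ^ 2) / 2 * x)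
  field_simp

theorem stmt_9_general (b γ ω c : ℝ) (hb : b = -3 / 16) (hγ : γ = 1 + 16 / 3 * b)
    (hc : -2 * Real.sqrt ω < c) (hc0 : c < 0) :
    solMom γ ω c = -((2 * ω + c ^ 2) / (3 * c)) * solMass γ ω c := by
  obtain rfl : γ = 0 := by rw [hγ, hb]; norm_num
  have hω : 0 < ω := sqrt_pos.1 (by linarith)
  have hc2 : c ^ 2 < 4 * ω := by nlinarith [sq_sqrt hω.le]
  set B := √((4 * ω - c ^ 2) / -c)
  set a := √(4 * ω - c ^ 2) / 2
  have ha : a ≠ 0 := (div_pos (sqrt_pos.2 (by linarith)) two_pos).ne'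
  have hB : B ^ 2 = (4 * ω - c ^ 2) / -c := sq_sqrt (div_nonneg (by linarith) (by linarith))
  have hΦ : Phi 0 ω c = sechProfile B a := Phi_zero_eq_sechProfile hc0
  have h4 : ∫ x, Phi 0 ω c x ^ 4 = 2 * B ^ 2 / 3 * solMass 0 ω c := by
    rw [solMass, hΦ]
    exact integral_sechProfile_pow_four B a
  rw [solMom_eq_of_hasDerivAt (Φ' := fun x => -a * tanh (a * x) * sechProfile B a x)
    ?deriv ?sq ?four ?im, h4, hB]
  · field_simp
    ring
  case deriv => rw [hΦ]; exact hasDerivAt_sechProfile B a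
  case sq => rw [hΦ]; exact integrable_sechProfile_pow B le_rfl ha
  case four => rw [hΦ]; exact integrable_sechProfile_pow B (by norm_num) ha
  case im =>
    rw [hΦ]
    simpa only [mul_assoc, sq] using (integrable_tanh_mul_sechProfile_sq B ha).const_mul (-a)

/-- Momentum formula for the solitons in the case `b = -3/16`, i.e. `γ = 0`:
`P(φ_{ω,c}) = -((2ω + c²)/(3c)) M(φ_{ω,c})` for `-2√ω < c < 0`. -/
theorem stmt_9 (b γ ω c : ℝ) (hb : b = -3 / 16) (hγ : γ = 1 + 16 / 3 * b)
    (hω : 0 < ω) (hc : -2 * Real.sqrt ω < c) (hc0 : c < 0) :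
    solMom γ ω c = -((2 * ω + c ^ 2) / (3 * c)) * solMass γ ω c :=
  stmt_9_general b γ ω c hb hγ hc hc0
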